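/- arXiv:1211.5727 — 2 statements merged into one kernel-verified Lean document; each statement's English description precedes it below -/
import Mathlib

section
/- Under the reduction v = k₁u + k₂ for real constants k₁, k₂ (so n = k₁m + k₂ where m = u - u_xx), the first component equation of the two-component system reduces to the generalized Camassa–Holm equation m_t = bu_x + ½k₁[m(u² - u_x²)]_x + ½k₂(2mu_x + m_x u). -/
noncomputable section

/-- Partial derivative in the first (space) variable. -/
def pd1 (f : ℝ → ℝ → ℝ) : ℝ → ℝ → ℝ := fun x t => deriv (fun y => f y t) x

/-- Partial derivative in the second (time) variable. -/
def pd2 (f : ℝ → ℝ → ℝ) : ℝ → ℝ → ℝ := fun x t => deriv (fun s => f x s) t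

/-- The momentum variable `m = u - u_xx`. -/
def mom (u : ℝ → ℝ → ℝ) : ℝ → ℝ → ℝ := fun x t => u x t - pd1 (pd1 u) x t

/-- First component equation of the two-component cubic Camassa–Holm system at a point:
`m_t = b u_x + ½ [m(uv - u_x v_x)]_x - ½ m (u v_x - u_x v)`, `m = u - u_xx`. -/
def Eq1 (b : ℝ) (u v : ℝ → ℝ → ℝ) (x t : ℝ) : Prop :=
  pd2 (mom u) x t =
    b * pd1 u x t
      + (1 / 2) * pd1 (fun x t => mom u x t * (u x t * v x t - pd1 u x t * pd1 v x t)) x t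
      - (1 / 2) * mom u x t * (u x t * pd1 v x t - pd1 u x t * v x t)

/-- Second component equation of the two-component cubic Camassa–Holm system at a point:
`n_t = b v_x + ½ [n(uv - u_x v_x)]_x + ½ n (u v_x - u_x v)`, `n = v - v_xx`. -/
def Eq2 (b : ℝ) (u v : ℝ → ℝ → ℝ) (x t : ℝ) : Prop :=
  pd2 (mom v) x t =
    b * pd1 v x t
      + (1 / 2) * pd1 (fun x t => mom v x t * (u x t * v x t - pd1 u x t * pd1 v x t)) x t
      + (1 / 2) * mom v x t * (u x t * pd1 v x t - pd1 u x t * v x t)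

/-- The full two-component cubic Camassa–Holm system with linear dispersion `b`. -/
def TwoCompSys (b : ℝ) (u v : ℝ → ℝ → ℝ) : Prop :=
  (∀ x t : ℝ, Eq1 b u v x t) ∧ (∀ x t : ℝ, Eq2 b u v x t)


open Function in
private lemma pd1_smooth' {f : ℝ → ℝ → ℝ} (hf : ContDiff ℝ (⊤ : ℕ∞) (uncurry f)) :
    ContDiff ℝ (⊤ : ℕ∞) (uncurry (pd1 f)) := by
  have h : uncurry (pd1 f)
      = fun p : ℝ × ℝ => fderiv ℝ (uncurry f) p (1, 0) := by
    funext p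
    obtain ⟨x, t⟩ := p
    show deriv (fun y => f y t) x = _
    have h1 : HasDerivAt (fun y : ℝ => (y, t)) ((1 : ℝ), (0 : ℝ)) x :=
      (hasDerivAt_id x).prodMk (hasDerivAt_const x t)
    exact (((hf.differentiable (by simp) (x, t)).hasFDerivAt).comp_hasDerivAt x h1).deriv
  rw [h]
  exact (hf.fderiv_right (by simp)).clm_apply contDiff_const

open Function in
private lemma slice_diffAt' {f : ℝ → ℝ → ℝ} (hf : ContDiff ℝ (⊤ : ℕ∞) (uncurry f)) (x t : ℝ) :
    DifferentiableAt ℝ (fun y => f y t) x := by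
  have hd : Differentiable ℝ (uncurry f) := hf.differentiable (by simp)
  exact (hd (x, t)).comp x
    (by fun_prop : DifferentiableAt ℝ (fun y : ℝ => (y, t)) x)

/-- Under the reduction `v = k₁ u + k₂` (so `n = k₁ m + k₂`), the first component equation
of the two-component cubic system reduces to the generalized Camassa–Holm equation
`m_t = b u_x + ½ k₁ [m(u² - u_x²)]_x + ½ k₂ (2 m u_x + m_x u)`. -/
theorem reduction_to_generalized_CamassaHolm (b k₁ k₂ : ℝ) (u : ℝ → ℝ → ℝ)
    (hu : ContDiff ℝ (⊤ : ℕ∞) (Function.uncurry u)) :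
    ∀ x t : ℝ,
      Eq1 b u (fun y s => k₁ * u y s + k₂) x t ↔
        pd2 (mom u) x t = b * pd1 u x t
          + (1 / 2) * k₁ * pd1 (fun y s => mom u y s * ((u y s) ^ 2 - (pd1 u y s) ^ 2)) x t
          + (1 / 2) * k₂ * (2 * mom u x t * pd1 u x t + pd1 (mom u) x t * u x t) := by

  intro x t
  have hux : ContDiff ℝ (⊤ : ℕ∞) (Function.uncurry (pd1 u)) := pd1_smooth' hu
  have huxx : ContDiff ℝ (⊤ : ℕ∞) (Function.uncurry (pd1 (pd1 u))) := pd1_smooth' hux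
  have hm : ContDiff ℝ (⊤ : ℕ∞) (Function.uncurry (mom u)) := hu.sub huxx
  have hv : ∀ y s : ℝ, pd1 (fun z w => k₁ * u z w + k₂) y s = k₁ * pd1 u y s := by
    intro y s
    show deriv (fun z => k₁ * u z s + k₂) y = _
    rw [deriv_add_const, deriv_const_mul _ (slice_diffAt' hu y s)]
    rfl
  have hA : HasDerivAt (fun y => mom u y t) (pd1 (mom u) x t) x :=
    (slice_diffAt' hm x t).hasDerivAt
  have hB : HasDerivAt (fun y => u y t) (pd1 u x t) x :=
    (slice_diffAt' hu x t).hasDerivAt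
  have hC : HasDerivAt (fun y => pd1 u y t) (pd1 (pd1 u) x t) x :=
    (slice_diffAt' hux x t).hasDerivAt
  have hD1 := hA.mul ((hB.mul ((hB.const_mul k₁).add_const k₂)).sub
    (hC.mul (hC.const_mul k₁)))
  have hD2 := hA.mul ((hB.pow 2).sub (hC.pow 2))
  have e1 : pd1 (fun x t => mom u x t *
      (u x t * (k₁ * u x t + k₂) - pd1 u x t * (k₁ * pd1 u x t))) x t
      = pd1 (mom u) x t * (u x t * (k₁ * u x t + k₂) - pd1 u x t * (k₁ * pd1 u x t))
        + mom u x t * ((pd1 u x t * (k₁ * u x t + k₂) + u x t * (k₁ * pd1 u x t))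
          - (pd1 (pd1 u) x t * (k₁ * pd1 u x t) + pd1 u x t * (k₁ * pd1 (pd1 u) x t))) :=
    hD1.deriv
  have e2 : pd1 (fun y s => mom u y s * ((u y s) ^ 2 - (pd1 u y s) ^ 2)) x t
      = pd1 (mom u) x t * ((u x t) ^ 2 - (pd1 u x t) ^ 2)
        + mom u x t * ((2 : ℕ) * u x t ^ 1 * pd1 u x t
          - (2 : ℕ) * pd1 u x t ^ 1 * pd1 (pd1 u) x t) :=
    hD2.deriv
  unfold Eq1
  simp only [hv]
  rw [e1, e2]
  constructor <;> intro h <;> rw [h] <;> ring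
end
end

section
/- The zero-curvature equation holds: if u, v are smooth solutions of the two-component system, then the matrices U = ½[[-α, λm],[-λn, α]] and V = -½[[A, B],[C, -A]] with A = λ^{-2}α + (α/2)(uv - u_xv_x) + ½(uv_x - u_xv), B = -λ^{-1}(u - αu_x) - ½λm(uv - u_xv_x), C = λ^{-1}(v + αv_x) + ½λn(uv - u_xv_x) satisfy U_t - V_x + [U, V] = 0 (as 2×2 matrix-valued functions), for every real λ ≠ 0 with 1 - λ²b ≥ 0 and α = √(1 - λ²b). Conversely, if U_t - V_x + [U,V] = 0 holds for such a λ with λ²b ≠ 1, then u, v satisfy the system. -/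
noncomputable section

/-- Entrywise spatial derivative of a matrix-valued function of `(x, t)`. -/
def dxMat (M : ℝ → ℝ → Matrix (Fin 2) (Fin 2) ℝ) : ℝ → ℝ → Matrix (Fin 2) (Fin 2) ℝ :=
  fun x t => Matrix.of fun i j => deriv (fun y => M y t i j) x

/-- Entrywise time derivative of a matrix-valued function of `(x, t)`. -/
def dtMat (M : ℝ → ℝ → Matrix (Fin 2) (Fin 2) ℝ) : ℝ → ℝ → Matrix (Fin 2) (Fin 2) ℝ :=
  fun x t => Matrix.of fun i j => deriv (fun s => M x s i j) t

lemma uncurry_pd1_eq {f : ℝ → ℝ → ℝ} (hf : ContDiff ℝ (⊤ : ℕ∞) (Function.uncurry f)) :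
    Function.uncurry (pd1 f) = fun p : ℝ × ℝ => fderiv ℝ (Function.uncurry f) p (1, 0) := by
  funext p
  have hline : HasDerivAt (fun y : ℝ => (y, p.2)) ((1 : ℝ), (0 : ℝ)) p.1 :=
    (hasDerivAt_id p.1).prodMk (hasDerivAt_const p.1 p.2)
  have hF : HasFDerivAt (Function.uncurry f) (fderiv ℝ (Function.uncurry f) p) p :=
    (hf.differentiable (by simp) p).hasFDerivAt
  exact (hF.comp_hasDerivAt p.1 hline).deriv

lemma smooth_pd1 {f : ℝ → ℝ → ℝ} (hf : ContDiff ℝ (⊤ : ℕ∞) (Function.uncurry f)) :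
    ContDiff ℝ (⊤ : ℕ∞) (Function.uncurry (pd1 f)) := by
  rw [uncurry_pd1_eq hf]
  exact (hf.fderiv_right (by simp)).clm_apply contDiff_const

lemma hasDerivAt_slice1 {f : ℝ → ℝ → ℝ} (hf : ContDiff ℝ (⊤ : ℕ∞) (Function.uncurry f)) (x t : ℝ) :
    HasDerivAt (fun y => f y t) (pd1 f x t) x := by
  have h2 : Differentiable ℝ (fun y : ℝ => Function.uncurry f (y, t)) :=
    (hf.differentiable (by simp)).comp (differentiable_id.prodMk (differentiable_const t))
  exact h2.differentiableAt.hasDerivAt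

lemma hasDerivAt_slice2 {f : ℝ → ℝ → ℝ} (hf : ContDiff ℝ (⊤ : ℕ∞) (Function.uncurry f)) (x t : ℝ) :
    HasDerivAt (fun s => f x s) (pd2 f x t) t := by
  have h2 : Differentiable ℝ (fun s : ℝ => Function.uncurry f (x, s)) :=
    (hf.differentiable (by simp)).comp ((differentiable_const x).prodMk differentiable_id)
  exact h2.differentiableAt.hasDerivAt

lemma smooth_mom {u : ℝ → ℝ → ℝ} (hu : ContDiff ℝ (⊤ : ℕ∞) (Function.uncurry u)) :
    ContDiff ℝ (⊤ : ℕ∞) (Function.uncurry (mom u)) := by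
  have h : Function.uncurry (mom u)
      = fun p => Function.uncurry u p - Function.uncurry (pd1 (pd1 u)) p := rfl
  rw [h]
  exact hu.sub (smooth_pd1 (smooth_pd1 hu))

set_option maxHeartbeats 2000000 in
lemma zc_entry_iff (b lam α : ℝ) (hlam : lam ≠ 0) (hα : α ^ 2 = 1 - lam ^ 2 * b)
    (u v : ℝ → ℝ → ℝ)
    (hu : ContDiff ℝ (⊤ : ℕ∞) (Function.uncurry u)) (hv : ContDiff ℝ (⊤ : ℕ∞) (Function.uncurry v))
    (A B C : ℝ → ℝ → ℝ)
    (hA : A = fun x t => (lam ^ 2)⁻¹ * α + (α / 2) * (u x t * v x t - pd1 u x t * pd1 v x t)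
        + (1 / 2) * (u x t * pd1 v x t - pd1 u x t * v x t))
    (hB : B = fun x t => -lam⁻¹ * (u x t - α * pd1 u x t)
        - (1 / 2) * lam * mom u x t * (u x t * v x t - pd1 u x t * pd1 v x t))
    (hC : C = fun x t => lam⁻¹ * (v x t + α * pd1 v x t)
        + (1 / 2) * lam * mom v x t * (u x t * v x t - pd1 u x t * pd1 v x t))
    (U V : ℝ → ℝ → Matrix (Fin 2) (Fin 2) ℝ)
    (hU : U = fun x t => (1 / 2 : ℝ) • !![-α, lam * mom u x t; -(lam * mom v x t), α])
    (hV : V = fun x t => (-(1 / 2) : ℝ) • !![A x t, B x t; C x t, -A x t])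
    (x t : ℝ) :
    dtMat U x t - dxMat V x t + (U x t * V x t - V x t * U x t) = 0 ↔
      (Eq1 b u v x t ∧ Eq2 b u v x t) := by
  have hu1 := hasDerivAt_slice1 hu x t
  have hu2 := hasDerivAt_slice1 (smooth_pd1 hu) x t
  have hu3 := hasDerivAt_slice1 (smooth_pd1 (smooth_pd1 hu)) x t
  have hv1 := hasDerivAt_slice1 hv x t
  have hv2 := hasDerivAt_slice1 (smooth_pd1 hv) x t
  have hv3 := hasDerivAt_slice1 (smooth_pd1 (smooth_pd1 hv)) x t
  have hmut : HasDerivAt (fun s => mom u x s) (pd2 (mom u) x t) t :=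
    hasDerivAt_slice2 (smooth_mom hu) x t
  have hmvt : HasDerivAt (fun s => mom v x s) (pd2 (mom v) x t) t :=
    hasDerivAt_slice2 (smooth_mom hv) x t
  have hmomu : HasDerivAt (fun y => mom u y t) (pd1 u x t - pd1 (pd1 (pd1 u)) x t) x :=
    hu1.sub hu3
  have hmomv : HasDerivAt (fun y => mom v y t) (pd1 v x t - pd1 (pd1 (pd1 v)) x t) x :=
    hv1.sub hv3
  have hH : HasDerivAt (fun y => u y t * v y t - pd1 u y t * pd1 v y t)
      (pd1 u x t * v x t + u x t * pd1 v x t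
        - (pd1 (pd1 u) x t * pd1 v x t + pd1 u x t * pd1 (pd1 v) x t)) x :=
    (hu1.mul hv1).sub (hu2.mul hv2)
  have hK : HasDerivAt (fun y => u y t * pd1 v y t - pd1 u y t * v y t)
      (pd1 u x t * pd1 v x t + u x t * pd1 (pd1 v) x t
        - (pd1 (pd1 u) x t * v x t + pd1 u x t * pd1 v x t)) x :=
    (hu1.mul hv2).sub (hu2.mul hv1)
  have hAd : HasDerivAt (fun y => A y t)
      (0 + α / 2 * (pd1 u x t * v x t + u x t * pd1 v x t
        - (pd1 (pd1 u) x t * pd1 v x t + pd1 u x t * pd1 (pd1 v) x t))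
        + 1 / 2 * (pd1 u x t * pd1 v x t + u x t * pd1 (pd1 v) x t
        - (pd1 (pd1 u) x t * v x t + pd1 u x t * pd1 v x t))) x := by
    rw [hA]
    exact ((hasDerivAt_const x ((lam ^ 2)⁻¹ * α)).add (hH.const_mul (α / 2))).add
      (hK.const_mul (1 / 2))
  have hBd : HasDerivAt (fun y => B y t)
      (-lam⁻¹ * (pd1 u x t - α * pd1 (pd1 u) x t)
        - (1 / 2 * lam * (pd1 u x t - pd1 (pd1 (pd1 u)) x t)
            * (u x t * v x t - pd1 u x t * pd1 v x t)
          + 1 / 2 * lam * mom u x t * (pd1 u x t * v x t + u x t * pd1 v x t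
            - (pd1 (pd1 u) x t * pd1 v x t + pd1 u x t * pd1 (pd1 v) x t)))) x := by
    rw [hB]
    exact ((hu1.sub (hu2.const_mul α)).const_mul (-lam⁻¹)).sub
      ((hmomu.const_mul (1 / 2 * lam)).mul hH)
  have hCd : HasDerivAt (fun y => C y t)
      (lam⁻¹ * (pd1 v x t + α * pd1 (pd1 v) x t)
        + (1 / 2 * lam * (pd1 v x t - pd1 (pd1 (pd1 v)) x t)
            * (u x t * v x t - pd1 u x t * pd1 v x t)
          + 1 / 2 * lam * mom v x t * (pd1 u x t * v x t + u x t * pd1 v x t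
            - (pd1 (pd1 u) x t * pd1 v x t + pd1 u x t * pd1 (pd1 v) x t)))) x := by
    rw [hC]
    exact ((hv1.add (hv2.const_mul α)).const_mul lam⁻¹).add
      ((hmomv.const_mul (1 / 2 * lam)).mul hH)
  -- entries of dtMat U
  have eU00 : dtMat U x t 0 0 = 0 := by
    have h1 : (fun s => U x s 0 0) = fun _ => 1 / 2 * (-α) := by
      funext s; rw [hU]; simp
    show deriv (fun s => U x s 0 0) t = 0
    rw [h1, deriv_const]
  have eU11 : dtMat U x t 1 1 = 0 := by
    have h1 : (fun s => U x s 1 1) = fun _ => 1 / 2 * α := by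
      funext s; rw [hU]; simp
    show deriv (fun s => U x s 1 1) t = 0
    rw [h1, deriv_const]
  have eU01 : dtMat U x t 0 1 = 1 / 2 * (lam * pd2 (mom u) x t) := by
    have h1 : (fun s => U x s 0 1) = fun s => 1 / 2 * (lam * mom u x s) := by
      funext s; rw [hU]; simp
    show deriv (fun s => U x s 0 1) t = _
    rw [h1]
    exact ((hmut.const_mul lam).const_mul (1 / 2)).deriv
  have eU10 : dtMat U x t 1 0 = 1 / 2 * -(lam * pd2 (mom v) x t) := by
    have h1 : (fun s => U x s 1 0) = fun s => 1 / 2 * -(lam * mom v x s) := by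
      funext s; rw [hU]; simp
    show deriv (fun s => U x s 1 0) t = _
    rw [h1]
    exact (((hmvt.const_mul lam).neg).const_mul (1 / 2)).deriv
  -- entries of dxMat V
  have eV00 : dxMat V x t 0 0 = -(1 / 2) *
      (0 + α / 2 * (pd1 u x t * v x t + u x t * pd1 v x t
        - (pd1 (pd1 u) x t * pd1 v x t + pd1 u x t * pd1 (pd1 v) x t))
        + 1 / 2 * (pd1 u x t * pd1 v x t + u x t * pd1 (pd1 v) x t
        - (pd1 (pd1 u) x t * v x t + pd1 u x t * pd1 v x t))) := by
    have h1 : (fun y => V y t 0 0) = fun y => -(1 / 2) * A y t := by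
      funext y; rw [hV]; simp
    show deriv (fun y => V y t 0 0) x = _
    rw [h1]
    exact (hAd.const_mul (-(1 / 2))).deriv
  have eV11 : dxMat V x t 1 1 = -(1 / 2) *
      -(0 + α / 2 * (pd1 u x t * v x t + u x t * pd1 v x t
        - (pd1 (pd1 u) x t * pd1 v x t + pd1 u x t * pd1 (pd1 v) x t))
        + 1 / 2 * (pd1 u x t * pd1 v x t + u x t * pd1 (pd1 v) x t
        - (pd1 (pd1 u) x t * v x t + pd1 u x t * pd1 v x t))) := by
    have h1 : (fun y => V y t 1 1) = fun y => -(1 / 2) * -A y t := by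
      funext y; rw [hV]; simp
    show deriv (fun y => V y t 1 1) x = _
    rw [h1]
    exact ((hAd.neg).const_mul (-(1 / 2))).deriv
  have eV01 : dxMat V x t 0 1 = -(1 / 2) *
      (-lam⁻¹ * (pd1 u x t - α * pd1 (pd1 u) x t)
        - (1 / 2 * lam * (pd1 u x t - pd1 (pd1 (pd1 u)) x t)
            * (u x t * v x t - pd1 u x t * pd1 v x t)
          + 1 / 2 * lam * mom u x t * (pd1 u x t * v x t + u x t * pd1 v x t
            - (pd1 (pd1 u) x t * pd1 v x t + pd1 u x t * pd1 (pd1 v) x t)))) := by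
    have h1 : (fun y => V y t 0 1) = fun y => -(1 / 2) * B y t := by
      funext y; rw [hV]; simp
    show deriv (fun y => V y t 0 1) x = _
    rw [h1]
    exact (hBd.const_mul (-(1 / 2))).deriv
  have eV10 : dxMat V x t 1 0 = -(1 / 2) *
      (lam⁻¹ * (pd1 v x t + α * pd1 (pd1 v) x t)
        + (1 / 2 * lam * (pd1 v x t - pd1 (pd1 (pd1 v)) x t)
            * (u x t * v x t - pd1 u x t * pd1 v x t)
          + 1 / 2 * lam * mom v x t * (pd1 u x t * v x t + u x t * pd1 v x t
            - (pd1 (pd1 u) x t * pd1 v x t + pd1 u x t * pd1 (pd1 v) x t)))) := by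
    have h1 : (fun y => V y t 1 0) = fun y => -(1 / 2) * C y t := by
      funext y; rw [hV]; simp
    show deriv (fun y => V y t 1 0) x = _
    rw [h1]
    exact (hCd.const_mul (-(1 / 2))).deriv
  -- expansion of the pd1 terms in Eq1, Eq2
  have hD1 : pd1 (fun x t => mom u x t * (u x t * v x t - pd1 u x t * pd1 v x t)) x t
      = (pd1 u x t - pd1 (pd1 (pd1 u)) x t) * (u x t * v x t - pd1 u x t * pd1 v x t)
        + mom u x t * (pd1 u x t * v x t + u x t * pd1 v x t
          - (pd1 (pd1 u) x t * pd1 v x t + pd1 u x t * pd1 (pd1 v) x t)) :=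
    (hmomu.mul hH).deriv
  have hD2 : pd1 (fun x t => mom v x t * (u x t * v x t - pd1 u x t * pd1 v x t)) x t
      = (pd1 v x t - pd1 (pd1 (pd1 v)) x t) * (u x t * v x t - pd1 u x t * pd1 v x t)
        + mom v x t * (pd1 u x t * v x t + u x t * pd1 v x t
          - (pd1 (pd1 u) x t * pd1 v x t + pd1 u x t * pd1 (pd1 v) x t)) :=
    (hmomv.mul hH).deriv
  have eq1_iff : Eq1 b u v x t ↔ pd2 (mom u) x t =
      b * pd1 u x t
        + 1 / 2 * ((pd1 u x t - pd1 (pd1 (pd1 u)) x t)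
            * (u x t * v x t - pd1 u x t * pd1 v x t)
          + mom u x t * (pd1 u x t * v x t + u x t * pd1 v x t
            - (pd1 (pd1 u) x t * pd1 v x t + pd1 u x t * pd1 (pd1 v) x t)))
        - 1 / 2 * mom u x t * (u x t * pd1 v x t - pd1 u x t * v x t) := by
    unfold Eq1; rw [hD1]
  have eq2_iff : Eq2 b u v x t ↔ pd2 (mom v) x t =
      b * pd1 v x t
        + 1 / 2 * ((pd1 v x t - pd1 (pd1 (pd1 v)) x t)
            * (u x t * v x t - pd1 u x t * pd1 v x t)
          + mom v x t * (pd1 u x t * v x t + u x t * pd1 v x t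
            - (pd1 (pd1 u) x t * pd1 v x t + pd1 u x t * pd1 (pd1 v) x t)))
        + 1 / 2 * mom v x t * (u x t * pd1 v x t - pd1 u x t * v x t) := by
    unfold Eq2; rw [hD2]
  have hb : b = (1 - α ^ 2) / lam ^ 2 := by
    rw [hα]; field_simp
    ring
  have main : dtMat U x t - dxMat V x t + (U x t * V x t - V x t * U x t)
      = !![0, lam / 2 * (pd2 (mom u) x t -
          (b * pd1 u x t
            + 1 / 2 * ((pd1 u x t - pd1 (pd1 (pd1 u)) x t)
                * (u x t * v x t - pd1 u x t * pd1 v x t)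
              + mom u x t * (pd1 u x t * v x t + u x t * pd1 v x t
                - (pd1 (pd1 u) x t * pd1 v x t + pd1 u x t * pd1 (pd1 v) x t)))
            - 1 / 2 * mom u x t * (u x t * pd1 v x t - pd1 u x t * v x t)));
          -(lam / 2) * (pd2 (mom v) x t -
          (b * pd1 v x t
            + 1 / 2 * ((pd1 v x t - pd1 (pd1 (pd1 v)) x t)
                * (u x t * v x t - pd1 u x t * pd1 v x t)
              + mom v x t * (pd1 u x t * v x t + u x t * pd1 v x t
                - (pd1 (pd1 u) x t * pd1 v x t + pd1 u x t * pd1 (pd1 v) x t)))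
            + 1 / 2 * mom v x t * (u x t * pd1 v x t - pd1 u x t * v x t))), 0] := by
    rw [← Matrix.ext_iff]
    simp only [Fin.forall_fin_two]
    refine ⟨⟨?_, ?_⟩, ?_, ?_⟩
    · simp only [Matrix.sub_apply, Matrix.add_apply]
      rw [eU00, eV00]
      simp only [hU, hV, hA, hB, hC, Matrix.mul_apply, Fin.sum_univ_two, Matrix.smul_apply,
        smul_eq_mul, Matrix.cons_val', Matrix.cons_val_zero, Matrix.cons_val_one,
        Matrix.head_cons, Matrix.head_fin_const, Matrix.empty_val', Matrix.cons_val_fin_one,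
        Matrix.of_apply]
      simp only [mom]
      field_simp
      ring
    · simp only [Matrix.sub_apply, Matrix.add_apply]
      rw [eU01, eV01]
      simp only [hU, hV, hA, hB, hC, Matrix.mul_apply, Fin.sum_univ_two, Matrix.smul_apply,
        smul_eq_mul, Matrix.cons_val', Matrix.cons_val_zero, Matrix.cons_val_one,
        Matrix.head_cons, Matrix.head_fin_const, Matrix.empty_val', Matrix.cons_val_fin_one,
        Matrix.of_apply]
      rw [hb]
      simp only [mom]
      field_simp
      ring
    · simp only [Matrix.sub_apply, Matrix.add_apply]
      rw [eU10, eV10]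
      simp only [hU, hV, hA, hB, hC, Matrix.mul_apply, Fin.sum_univ_two, Matrix.smul_apply,
        smul_eq_mul, Matrix.cons_val', Matrix.cons_val_zero, Matrix.cons_val_one,
        Matrix.head_cons, Matrix.head_fin_const, Matrix.empty_val', Matrix.cons_val_fin_one,
        Matrix.of_apply]
      rw [hb]
      simp only [mom]
      field_simp
      ring
    · simp only [Matrix.sub_apply, Matrix.add_apply]
      rw [eU11, eV11]
      simp only [hU, hV, hA, hB, hC, Matrix.mul_apply, Fin.sum_univ_two, Matrix.smul_apply,
        smul_eq_mul, Matrix.cons_val', Matrix.cons_val_zero, Matrix.cons_val_one,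
        Matrix.head_cons, Matrix.head_fin_const, Matrix.empty_val', Matrix.cons_val_fin_one,
        Matrix.of_apply]
      simp only [mom]
      field_simp
      ring
  rw [main]
  have h2ne : (lam / 2 : ℝ) ≠ 0 := div_ne_zero hlam two_ne_zero
  constructor
  · intro h
    have h01 := Matrix.ext_iff.mpr h 0 1
    have h10 := Matrix.ext_iff.mpr h 1 0
    simp only [Matrix.cons_val', Matrix.cons_val_zero, Matrix.cons_val_one, Matrix.head_cons,
      Matrix.empty_val', Matrix.cons_val_fin_one, Matrix.zero_apply] at h01 h10
    constructor
    · refine eq1_iff.mpr (sub_eq_zero.mp ?_)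
      exact (mul_eq_zero.mp h01).resolve_left h2ne
    · refine eq2_iff.mpr (sub_eq_zero.mp ?_)
      have := (mul_eq_zero.mp h10).resolve_left (neg_ne_zero.mpr h2ne)
      exact this
  · rintro ⟨h1, h2⟩
    have hx : pd2 (mom u) x t -
        (b * pd1 u x t
          + 1 / 2 * ((pd1 u x t - pd1 (pd1 (pd1 u)) x t)
              * (u x t * v x t - pd1 u x t * pd1 v x t)
            + mom u x t * (pd1 u x t * v x t + u x t * pd1 v x t
              - (pd1 (pd1 u) x t * pd1 v x t + pd1 u x t * pd1 (pd1 v) x t)))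
          - 1 / 2 * mom u x t * (u x t * pd1 v x t - pd1 u x t * v x t)) = 0 :=
      sub_eq_zero.mpr (eq1_iff.mp h1)
    have hy : pd2 (mom v) x t -
        (b * pd1 v x t
          + 1 / 2 * ((pd1 v x t - pd1 (pd1 (pd1 v)) x t)
              * (u x t * v x t - pd1 u x t * pd1 v x t)
            + mom v x t * (pd1 u x t * v x t + u x t * pd1 v x t
              - (pd1 (pd1 u) x t * pd1 v x t + pd1 u x t * pd1 (pd1 v) x t)))
          + 1 / 2 * mom v x t * (u x t * pd1 v x t - pd1 u x t * v x t)) = 0 :=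
      sub_eq_zero.mpr (eq2_iff.mp h2)
    rw [hx, hy, mul_zero, mul_zero]
    rw [← Matrix.ext_iff]
    simp only [Fin.forall_fin_two]
    refine ⟨⟨?_, ?_⟩, ?_, ?_⟩ <;> simp

/-- Zero-curvature formulation: for smooth `u, v`, real `λ ≠ 0` with `1 - λ²b ≥ 0` and
`λ²b ≠ 1`, `α = √(1-λ²b)`, the Lax matrices `U`, `V` satisfy
`U_t - V_x + [U, V] = 0` if `u, v` solve the two-component cubic system; and conversely,
the zero-curvature equation for such a `λ` implies that `u, v` solve the system. -/
theorem zero_curvature_iff_system (b lam : ℝ) (hlam : lam ≠ 0)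
    (hdisc : 1 - lam ^ 2 * b ≥ 0) (hne : lam ^ 2 * b ≠ 1) (u v : ℝ → ℝ → ℝ)
    (hu : ContDiff ℝ (⊤ : ℕ∞) (Function.uncurry u)) (hv : ContDiff ℝ (⊤ : ℕ∞) (Function.uncurry v)) :
    let α : ℝ := Real.sqrt (1 - lam ^ 2 * b)
    let A : ℝ → ℝ → ℝ := fun x t =>
      (lam ^ 2)⁻¹ * α + (α / 2) * (u x t * v x t - pd1 u x t * pd1 v x t)
        + (1 / 2) * (u x t * pd1 v x t - pd1 u x t * v x t)
    let B : ℝ → ℝ → ℝ := fun x t =>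
      -lam⁻¹ * (u x t - α * pd1 u x t)
        - (1 / 2) * lam * mom u x t * (u x t * v x t - pd1 u x t * pd1 v x t)
    let C : ℝ → ℝ → ℝ := fun x t =>
      lam⁻¹ * (v x t + α * pd1 v x t)
        + (1 / 2) * lam * mom v x t * (u x t * v x t - pd1 u x t * pd1 v x t)
    let U : ℝ → ℝ → Matrix (Fin 2) (Fin 2) ℝ := fun x t =>
      (1 / 2 : ℝ) • !![-α, lam * mom u x t; -(lam * mom v x t), α]
    let V : ℝ → ℝ → Matrix (Fin 2) (Fin 2) ℝ := fun x t =>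
      (-(1 / 2) : ℝ) • !![A x t, B x t; C x t, -A x t]
    (TwoCompSys b u v →
      ∀ x t : ℝ, dtMat U x t - dxMat V x t + (U x t * V x t - V x t * U x t) = 0) ∧
    ((∀ x t : ℝ, dtMat U x t - dxMat V x t + (U x t * V x t - V x t * U x t) = 0) →
      TwoCompSys b u v) := by

  intro α A B C U V
  have hα : α ^ 2 = 1 - lam ^ 2 * b := Real.sq_sqrt hdisc
  have key : ∀ x t : ℝ,
      (dtMat U x t - dxMat V x t + (U x t * V x t - V x t * U x t) = 0) ↔
        (Eq1 b u v x t ∧ Eq2 b u v x t) :=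
    fun x t => zc_entry_iff b lam α hlam hα u v hu hv A B C rfl rfl rfl U V rfl rfl x t
  exact ⟨fun hsys x t => (key x t).mpr ⟨hsys.1 x t, hsys.2 x t⟩,
    fun h => ⟨fun x t => ((key x t).mp (h x t)).1, fun x t => ((key x t).mp (h x t)).2⟩⟩
end
end
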